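/- arXiv:1411.0497 — 2 statements merged into one kernel-verified Lean document; each statement's English description precedes it below -/
import Mathlib

section
/- For all real numbers p ≥ 2 and t ∈ (0, π/2], one has sin t + p·cos t ≤ (p³ + 20/sin t)^{1/3}. -/
/-! If `p sin t ≥ 2`, the bound `cos t ≤ 1 - sin² t / 2` already gives `sin t + p cos t ≤ p`.
Otherwise `sin t + p cos t ≤ p + sin t`, and with `s = sin t` the excess
`s ((p + s)³ - p³) = 3 (ps)² + 3 (ps) s² + s⁴` is at most `12 + 6 + 1 < 20`. -/

open Real

lemma Real.le_rpow_inv_natCast_of_pow_le {x y : ℝ} {n : ℕ} (hn : n ≠ 0) (hy : 0 ≤ y)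
    (h : x ^ n ≤ y) : x ≤ y ^ (n⁻¹ : ℝ) := by
  rcases lt_or_ge x 0 with hx | hx
  · exact hx.le.trans (rpow_nonneg hy _)
  · rw [le_rpow_inv_iff_of_pos hx hy (by positivity), rpow_natCast]
    exact h

lemma Real.cos_le_one_sub_sin_sq_div_two (t : ℝ) : cos t ≤ 1 - sin t ^ 2 / 2 := by
  have hsq : cos t ^ 2 ≤ (1 - sin t ^ 2 / 2) ^ 2 := by
    nlinarith [sin_sq_add_cos_sq t, sq_nonneg (sin t ^ 2)]
  have hpos : 0 ≤ 1 - sin t ^ 2 / 2 := by nlinarith [sin_sq_le_one t]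
  exact (abs_le_of_sq_le_sq' hsq hpos).2

lemma add_mul_le_of_two_le_mul {p s c : ℝ} (hp : 0 ≤ p) (hs : 0 ≤ s)
    (hc : c ≤ 1 - s ^ 2 / 2) (hps : 2 ≤ p * s) : s + p * c ≤ p := by
  calc s + p * c ≤ s + p * (1 - s ^ 2 / 2) := by gcongr
    _ = p - s * (p * s - 2) / 2 := by ring
    _ ≤ p := by nlinarith

lemma add_pow_three_le_of_mul_le_two {p s : ℝ} (hp : 0 ≤ p) (hs : 0 < s) (hs1 : s ≤ 1)
    (hps : p * s ≤ 2) : (p + s) ^ 3 ≤ p ^ 3 + 20 / s := by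
  have hps0 : 0 ≤ p * s := by positivity
  have hexcess : s * ((p + s) ^ 3 - p ^ 3) = 3 * (p * s) ^ 2 + 3 * (p * s) * s ^ 2 + s ^ 4 := by
    ring
  have hbound : 3 * (p * s) ^ 2 + 3 * (p * s) * s ^ 2 + s ^ 4 ≤ 20 := by
    have hs2 : s ^ 2 ≤ 1 := pow_le_one₀ hs.le hs1
    have hs4 : s ^ 4 ≤ 1 := pow_le_one₀ hs.le hs1
    nlinarith [mul_le_mul hps hs2 (sq_nonneg s) zero_le_two]
  rw [← sub_le_iff_le_add', le_div_iff₀ hs, mul_comm]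
  linarith

lemma sin_add_mul_cos_pow_three_le {p t : ℝ} (hp : 0 ≤ p) (hs : 0 < sin t) :
    (sin t + p * cos t) ^ 3 ≤ p ^ 3 + 20 / sin t := by
  have h3 : Odd 3 := by decide
  rcases le_total 2 (p * sin t) with hps | hps
  · have hle := add_mul_le_of_two_le_mul hp hs.le (cos_le_one_sub_sin_sq_div_two t) hps
    have h20 : 0 ≤ 20 / sin t := by positivity
    linarith [h3.pow_le_pow.2 hle]
  · have hle : sin t + p * cos t ≤ p + sin t := by nlinarith [cos_le_one t]
    exact (h3.pow_le_pow.2 hle).trans (add_pow_three_le_of_mul_le_two hp hs (sin_le_one t) hps)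

theorem sin_add_mul_cos_le_cuberoot (p t : ℝ) (hp : 2 ≤ p)
    (ht0 : 0 < t) (ht : t ≤ π / 2) :
    Real.sin t + p * Real.cos t ≤ (p ^ 3 + 20 / Real.sin t) ^ ((1 : ℝ) / 3) := by
  have hs : 0 < sin t := sin_pos_of_pos_of_lt_pi ht0 (by linarith [pi_pos])
  have hp0 : 0 ≤ p := by linarith
  have hy : 0 ≤ p ^ 3 + 20 / sin t := by positivity
  simpa using le_rpow_inv_natCast_of_pow_le three_ne_zero hy (sin_add_mul_cos_pow_three_le hp0 hs)
end

section
/- Let (S_r) be a sequence of nonnegative reals with S_{r} ≤ |sin t_r| + S_{r−1}|cos t_r| for each r, where t_r are reals with sin t_r > 0 and t_r ∈ (0, π/2]. If S_{r₀} ≥ 8 for some index r₀, then for all r > r₀, S_r³ ≤ S_{r₀}³ + Σ_{j=r₀+1}^{r} 20/sin t_j. -/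
/-! Write `s = sin t`, `c = |cos t|` and `u = p s`. Expanding `s (s + p c)³` and using `c ≤ 1`,
`c² = 1 - s²` bounds it by `s p³ + (1 + 3u + 3u² - u³)`, and the cubic in brackets is at most `20`
for `u ≥ 0`. Hence each step raises `S³` by at most `20 / sin t_r`, and the bound telescopes. -/

open Real Finset

lemma one_add_three_mul_add_three_mul_sq_sub_cube_le {u : ℝ} (hu : 0 ≤ u) :
    1 + 3 * u + 3 * u ^ 2 - u ^ 3 ≤ 20 := by
  nlinarith [sq_nonneg (u - 5 / 2), mul_nonneg hu (sq_nonneg (u - 5 / 2))]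

lemma mul_cube_add_mul_le {s c p : ℝ} (hs : 0 < s) (hc : 0 ≤ c) (hsc : s ^ 2 + c ^ 2 = 1)
    (hp : 0 ≤ p) : s * (s + p * c) ^ 3 ≤ s * p ^ 3 + 20 := by
  have hs1 : s ≤ 1 := by nlinarith
  have hc1 : c ≤ 1 := by nlinarith
  have hu : 0 ≤ p * s := mul_nonneg hp hs.le
  calc s * (s + p * c) ^ 3
      = s ^ 4 + 3 * (p * s) * (c * s ^ 2) + 3 * (p * s) ^ 2 * c ^ 2 + p ^ 3 * s * c ^ 3 := by ring
    _ ≤ 1 + 3 * (p * s) + 3 * (p * s) ^ 2 + p ^ 3 * s * c ^ 2 := by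
        have hs4 : s ^ 4 ≤ 1 := pow_le_one₀ hs.le hs1
        have hcs : c * s ^ 2 ≤ 1 := mul_le_one₀ hc1 (by positivity) (pow_le_one₀ hs.le hs1)
        have hc2 : c ^ 2 ≤ 1 := pow_le_one₀ hc hc1
        have hc3 : c ^ 3 ≤ c ^ 2 := pow_le_pow_of_le_one hc hc1 (by norm_num)
        have hp3s : 0 ≤ p ^ 3 * s := by positivity
        linarith [mul_le_mul_of_nonneg_left hcs hu,
          mul_le_mul_of_nonneg_left hc2 (sq_nonneg (p * s)),
          mul_le_mul_of_nonneg_left hc3 hp3s]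
    _ = s * p ^ 3 + (1 + 3 * (p * s) + 3 * (p * s) ^ 2 - (p * s) ^ 3) := by
        rw [show c ^ 2 = 1 - s ^ 2 by linarith]; ring
    _ ≤ s * p ^ 3 + 20 := by
        gcongr; exact one_add_three_mul_add_three_mul_sq_sub_cube_le hu

lemma cube_add_mul_le {s c p : ℝ} (hs : 0 < s) (hc : 0 ≤ c) (hsc : s ^ 2 + c ^ 2 = 1)
    (hp : 0 ≤ p) : (s + p * c) ^ 3 ≤ p ^ 3 + 20 / s := by
  rw [← sub_le_iff_le_add', le_div_iff₀ hs]
  nlinarith [mul_cube_add_mul_le hs hc hsc hp]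

lemma le_add_sum_Icc_of_succ_le_add {M : Type*} [AddCommMonoid M] [PartialOrder M]
    [IsOrderedAddMonoid M] {a b : ℕ → M} {r₀ : ℕ}
    (h : ∀ r, r₀ ≤ r → a (r + 1) ≤ a r + b (r + 1)) :
    ∀ r, r₀ ≤ r → a r ≤ a r₀ + ∑ j ∈ Icc (r₀ + 1) r, b j := by
  intro r hr
  induction r, hr using Nat.le_induction with
  | base => simp
  | succ n hn ih =>
    rw [sum_Icc_succ_top (by omega), ← add_assoc]
    exact (h n hn).trans (add_le_add_left ih _)

theorem S_cube_bound_general (S t : ℕ → ℝ) (r₀ : ℕ)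
    (hSnonneg : ∀ r, 0 ≤ S r)
    (hsin : ∀ r, 0 < Real.sin (t r))
    (hstep : ∀ r, 1 ≤ r → S r ≤ |Real.sin (t r)| + S (r - 1) * |Real.cos (t r)|) :
    ∀ r, r₀ < r →
      S r ^ 3 ≤ S r₀ ^ 3 + ∑ j ∈ Finset.Icc (r₀ + 1) r, 20 / Real.sin (t j) := by
  have hcube_step : ∀ r, S (r + 1) ^ 3 ≤ S r ^ 3 + 20 / Real.sin (t (r + 1)) := by
    intro r
    have h := hstep (r + 1) (by omega)
    rw [Nat.add_sub_cancel, abs_of_pos (hsin _)] at h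
    calc S (r + 1) ^ 3 ≤ (Real.sin (t (r + 1)) + S r * |Real.cos (t (r + 1))|) ^ 3 :=
          pow_le_pow_left₀ (hSnonneg _) h 3
      _ ≤ S r ^ 3 + 20 / Real.sin (t (r + 1)) :=
          cube_add_mul_le (hsin _) (abs_nonneg _) (by rw [sq_abs, sin_sq_add_cos_sq])
            (hSnonneg r)
  exact fun r hr => le_add_sum_Icc_of_succ_le_add (a := fun r => S r ^ 3) (fun r _ => hcube_step r) r hr.le

theorem S_cube_bound (S t : ℕ → ℝ) (r₀ : ℕ)
    (hSnonneg : ∀ r, 0 ≤ S r)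
    (ht : ∀ r, 0 < t r ∧ t r ≤ π / 2)
    (hsin : ∀ r, 0 < Real.sin (t r))
    (hstep : ∀ r, 1 ≤ r → S r ≤ |Real.sin (t r)| + S (r - 1) * |Real.cos (t r)|)
    (h8 : 8 ≤ S r₀)
    (h2 : ∀ r, r₀ ≤ r → 2 ≤ S r) :
    ∀ r, r₀ < r →
      S r ^ 3 ≤ S r₀ ^ 3 + ∑ j ∈ Finset.Icc (r₀ + 1) r, 20 / Real.sin (t j) :=
  S_cube_bound_general S t r₀ hSnonneg hsin hstep
end
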